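/- Let H be obtained from a graph G with vertex set {v_1,…,v_k} by expanding each vertex v_i by a module M_i = (V_i, E_i), and let S be a minimal separator of H. Then one of the following holds: (1) S is the expansion of a minimal separator S_G of G, i.e., S = ∪_{v_i ∈ S_G} V_i for some minimal separator S_G of G; or (2) there is an index i ∈ {1,…,k} such that S ∩ V_i is a minimal separator of M_i and S \ V_i = N_H(V_i). -/

import Mathlib

open SimpleGraph

universe u

/-- Reachability in `G − S`: there is a walk whose support avoids `S`. -/
def AvoidReach {V : Type u} (G : SimpleGraph V) (S : Set V) (u v : V) : Prop :=
  ∃ w : G.Walk u v, ∀ x ∈ w.support, x ∉ S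

/-- `S` is a `u,v`-separator of `G`: `u, v ∉ S` and `u,v` lie in different
connected components of `G − S`. -/
def IsSep {V : Type u} (G : SimpleGraph V) (S : Set V) (u v : V) : Prop :=
  u ∉ S ∧ v ∉ S ∧ ¬ AvoidReach G S u v

/-- `S` is a minimal `u,v`-separator of `G`. -/
def IsMinSep {V : Type u} (G : SimpleGraph V) (S : Set V) (u v : V) : Prop :=
  IsSep G S u v ∧ ∀ T ⊂ S, ¬ IsSep G T u v

/-- `S` is a minimal separator of `G`. -/
def IsMinimalSeparator {V : Type u} (G : SimpleGraph V) (S : Set V) : Prop :=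
  ∃ u v, IsMinSep G S u v

/-- `C` is a connected component of `G − S`. -/
def IsCompOf {V : Type u} (G : SimpleGraph V) (S C : Set V) : Prop :=
  ∃ v, v ∉ S ∧ C = {x | AvoidReach G S v x}

/-- The neighbourhood of a vertex set `A`: vertices outside `A` with a neighbour in `A`. -/
def setNbhd {V : Type u} (G : SimpleGraph V) (A : Set V) : Set V :=
  {x | x ∉ A ∧ ∃ a ∈ A, G.Adj x a}

/-- `C` is a full component of `G − S` associated to `S`, i.e. `N(C) = S`. -/
def IsFullCompOf {V : Type u} (G : SimpleGraph V) (S C : Set V) : Prop :=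
  IsCompOf G S C ∧ setNbhd G C = S

/-- `W` is a vertex cover of `G`. -/
def IsVC {V : Type u} (G : SimpleGraph V) (W : Set V) : Prop :=
  ∀ ⦃a b⦄, G.Adj a b → a ∈ W ∨ b ∈ W

/-- The vertex cover number `vc(G)`. -/
noncomputable def vcNum {V : Type u} (G : SimpleGraph V) : ℕ :=
  sInf {n | ∃ W : Set V, IsVC G W ∧ W.ncard = n}

/-- A graph is chordal if every cycle on four or more vertices has a chord, i.e. an
edge of the graph between two vertices of the cycle that is not an edge of the cycle. -/
def IsChordalG {V : Type u} (G : SimpleGraph V) : Prop :=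
  ∀ (v : V) (w : G.Walk v v), w.IsCycle → 4 ≤ w.length →
    ∃ x ∈ w.support, ∃ y ∈ w.support, G.Adj x y ∧ s(x, y) ∉ w.edges

/-- `H` is a minimal triangulation of `G`: a chordal supergraph of `G` such that no graph
strictly between `G` and `H` is chordal. -/
def IsMinimalTriangulation {V : Type u} (G H : SimpleGraph V) : Prop :=
  G ≤ H ∧ IsChordalG H ∧ ∀ F : SimpleGraph V, G ≤ F → F < H → ¬ IsChordalG F

/-- `Ω` is a maximal clique of `H`. -/
def IsMaxClique {V : Type u} (H : SimpleGraph V) (Ω : Set V) : Prop :=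
  H.IsClique Ω ∧ ∀ t : Set V, H.IsClique t → Ω ⊆ t → t = Ω

/-- `Ω` is a potential maximal clique of `G`: a maximal clique of some
minimal triangulation of `G`. -/
def IsPMC {V : Type u} (G : SimpleGraph V) (Ω : Set V) : Prop :=
  ∃ H : SimpleGraph V, IsMinimalTriangulation G H ∧ IsMaxClique H Ω

/-- The graph `H` obtained from `G` (with vertex set `{v_1, …, v_k} = Fin k`) by expanding
each vertex `i` by the module `M i`: the vertex set is the disjoint union `Σ i, V i`;
within each `V i` the edges are those of `M i`, and `a ∈ V i` is adjacent to `b ∈ V j`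
(`i ≠ j`) iff `i` and `j` are adjacent in `G`. -/
def expandG {k : ℕ} {V : Fin k → Type u} (G : SimpleGraph (Fin k))
    (M : ∀ i, SimpleGraph (V i)) : SimpleGraph (Σ i, V i) :=
  SimpleGraph.fromRel (fun a b =>
    (∃ h : a.1 = b.1, (M b.1).Adj (h ▸ a.2) b.2) ∨ (a.1 ≠ b.1 ∧ G.Adj a.1 b.1))

/-- The set of vertices of the expanded graph coming from the module `M i`,
i.e. the copy of `V i`. -/
def modSet {k : ℕ} {V : Fin k → Type u} (i : Fin k) : Set (Σ i, V i) := {x | x.1 = i}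

/-!
Let `S` be a minimal `u,v`-separator of `H` and `C_u`, `C_v` the components of `u` and `v` in
`H − S`. A vertex outside a module `V_i` is adjacent to all of `V_i` or to none of it.

If some `V_i` meets both `C_u` and `C_v`, neither component can leave `V_i` (the first vertex
outside would be adjacent to both), so `N(V_i) ⊆ S`, and since every vertex of `S` has a neighbour
in `C_u ⊆ V_i`, also `S \ V_i ⊆ N(V_i)`. Walks from `V_i` avoiding `N(V_i)` stay in `V_i`, so
`u,v`-separators containing `N(V_i)` are exactly the separators of `M_i` with `N(V_i)` added.

Otherwise no module meets both components, and since every vertex of `S` has neighbours in both,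
`S` is a union of modules. The modules contained in `S` separate `u` and `v` in `G`, and by
minimality of `S` every minimal separator of `G` inside this set expands back to `S`.
-/


namespace AvoidReach

variable {α : Type*} {Γ : SimpleGraph α} {S T : Set α} {u v w : α}

lemma refl (hu : u ∉ S) : AvoidReach Γ S u u := ⟨Walk.nil, by simpa⟩

lemma symm (h : AvoidReach Γ S u v) : AvoidReach Γ S v u := by
  obtain ⟨p, hp⟩ := h
  exact ⟨p.reverse, by simpa using hp⟩

lemma trans (huv : AvoidReach Γ S u v) (hvw : AvoidReach Γ S v w) : AvoidReach Γ S u w := by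
  obtain ⟨p, hp⟩ := huv
  obtain ⟨q, hq⟩ := hvw
  refine ⟨p.append q, fun x hx => ?_⟩
  rcases (Walk.mem_support_append_iff _ _).1 hx with hx | hx
  exacts [hp x hx, hq x hx]

lemma left_notMem (h : AvoidReach Γ S u v) : u ∉ S := by
  obtain ⟨p, hp⟩ := h
  exact hp u p.start_mem_support

lemma right_notMem (h : AvoidReach Γ S u v) : v ∉ S := by
  obtain ⟨p, hp⟩ := h
  exact hp v p.end_mem_support

lemma step (h : AvoidReach Γ S u v) (hvw : Γ.Adj v w) (hw : w ∉ S) : AvoidReach Γ S u w :=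
  h.trans ⟨hvw.toWalk, by simp [hvw.support_toWalk, h.right_notMem, hw]⟩

lemma anti (h : AvoidReach Γ S u v) (hTS : T ⊆ S) : AvoidReach Γ T u v := by
  obtain ⟨p, hp⟩ := h
  exact ⟨p, fun x hx hxT => hp x hx (hTS hxT)⟩

lemma induction_on {P : α → Prop} (h : AvoidReach Γ S u v) (hu : P u)
    (hstep : ∀ a b, AvoidReach Γ S u a → P a → Γ.Adj a b → b ∉ S → P b) : P v := by
  obtain ⟨p, hp⟩ := h
  suffices ∀ a (q : Γ.Walk a v), (∀ x ∈ q.support, x ∉ S) → AvoidReach Γ S u a → P a → P v from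
    this u p hp (refl (hp u p.start_mem_support)) hu
  clear p hp
  intro a q
  induction q with
  | nil => exact fun _ _ ha => ha
  | @cons a c _ hadj q ih =>
    intro hq hua ha
    have hc := hq c (by simp)
    exact ih (fun x hx => hq x (by simp [hx])) (hua.step hadj hc) (hstep a c hua ha hadj hc)

lemma map {β : Type*} {Γ' : SimpleGraph β} (f : Γ →g Γ') {W : Set β}
    (h : AvoidReach Γ (f ⁻¹' W) u v) : AvoidReach Γ' W (f u) (f v) := by
  obtain ⟨p, hp⟩ := h
  refine ⟨p.map f, fun x hx => ?_⟩
  obtain ⟨y, hy, rfl⟩ := List.mem_map.1 ((Walk.support_map f p) ▸ hx)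
  exact hp y hy

end AvoidReach

section Separators

variable {α : Type*} {Γ : SimpleGraph α} {S : Set α} {u v s : α}

lemma IsSep.symm (h : IsSep Γ S u v) : IsSep Γ S v u :=
  ⟨h.2.1, h.1, fun hr => h.2.2 hr.symm⟩

lemma IsMinSep.symm (h : IsMinSep Γ S u v) : IsMinSep Γ S v u :=
  ⟨h.1.symm, fun T hT hs => h.2 T hT hs.symm⟩

lemma IsMinSep.exists_adj_of_mem (h : IsMinSep Γ S u v) (hs : s ∈ S) :
    ∃ c, AvoidReach Γ S u c ∧ Γ.Adj c s := by
  by_contra! hcon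
  refine h.2 (S \ {s}) ⟨Set.sdiff_subset, fun hsub => (hsub hs).2 rfl⟩
    ⟨fun hu => h.1.1 hu.1, fun hv => h.1.2.1 hv.1, fun hr => h.1.2.2 ?_⟩
  refine hr.induction_on (P := AvoidReach Γ S u) (.refl h.1.1) fun a b _ ha hab hb => ?_
  by_cases hbs : b = s
  · exact absurd (hbs ▸ hab) (hcon a ha)
  · exact ha.step hab fun hbS => hb ⟨hbS, hbs⟩

lemma IsMinSep.diff_subset_setNbhd {A : Set α} (h : IsMinSep Γ S u v)
    (hA : ∀ z, AvoidReach Γ S u z → z ∈ A) : S \ A ⊆ setNbhd Γ A := by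
  rintro s ⟨hs, hsA⟩
  obtain ⟨c, hc, hcs⟩ := h.exists_adj_of_mem hs
  exact ⟨hsA, c, hA c hc, hcs.symm⟩

lemma IsSep.exists_isMinSep_subset [Finite α] (h : IsSep Γ S u v) :
    ∃ T ⊆ S, IsMinSep Γ T u v := by
  obtain ⟨T, hTS, ⟨-, hT⟩, hTmin⟩ :=
    exists_minimal_le_of_wellFoundedLT (fun T => T ⊆ S ∧ IsSep Γ T u v) S ⟨le_rfl, h⟩
  exact ⟨T, hTS, hT, fun T' hT' hsep =>
    hT'.2 (hTmin ⟨hT'.1.trans hTS, hsep⟩ hT'.1)⟩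

end Separators

section Expansion

variable {k : ℕ} {V : Fin k → Type*} {G : SimpleGraph (Fin k)} {M : ∀ i, SimpleGraph (V i)}
  {S W : Set (Σ i, V i)}

lemma expandG_adj_mk_iff {i : Fin k} {x y : V i} :
    (expandG G M).Adj ⟨i, x⟩ ⟨i, y⟩ ↔ (M i).Adj x y := by
  simp only [expandG, fromRel_adj, ne_eq, not_true_eq_false, false_and, or_false]
  constructor
  · rintro ⟨-, ⟨-, hM⟩ | ⟨-, hM⟩⟩
    exacts [hM, hM.symm]
  · intro h
    exact ⟨fun he => h.ne (eq_of_heq (Sigma.mk.inj_iff.1 he).2), Or.inl ⟨trivial, h⟩⟩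

lemma expandG_adj_of_fst_ne {a b : Σ i, V i} (hne : a.1 ≠ b.1) :
    (expandG G M).Adj a b ↔ G.Adj a.1 b.1 := by
  simp only [expandG, fromRel_adj]
  constructor
  · rintro ⟨-, (⟨h, -⟩ | ⟨-, hG⟩) | (⟨h, -⟩ | ⟨-, hG⟩)⟩
    exacts [absurd h hne, hG, absurd h.symm hne, hG.symm]
  · exact fun h => ⟨fun he => hne (congrArg Sigma.fst he), Or.inl (Or.inr ⟨hne, h⟩)⟩

lemma avoidReach_expandG_mk_iff {i : Fin k} {x y : V i}
    (hN : setNbhd (expandG G M) (modSet i) ⊆ W) :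
    AvoidReach (expandG G M) W ⟨i, x⟩ ⟨i, y⟩ ↔ AvoidReach (M i) (Sigma.mk i ⁻¹' W) x y := by
  refine ⟨fun h => ?_, AvoidReach.map ⟨Sigma.mk i, expandG_adj_mk_iff.2⟩⟩
  obtain ⟨y', hy', hxy'⟩ := h.induction_on
    (P := fun z => ∃ y', z = ⟨i, y'⟩ ∧ AvoidReach (M i) (Sigma.mk i ⁻¹' W) x y')
    ⟨x, rfl, .refl h.left_notMem⟩ <| by
      rintro - ⟨j, z⟩ - ⟨y', rfl, hy'⟩ hadj hz
      by_cases hj : j = i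
      · subst hj
        exact ⟨z, rfl, hy'.step (expandG_adj_mk_iff.1 hadj) hz⟩
      · exact absurd (hN ⟨hj, ⟨i, y'⟩, rfl, hadj.symm⟩) hz
  cases sigma_mk_injective hy'
  exact hxy'

lemma AvoidReach.fst_of_expandG {a b : Σ i, V i} (h : AvoidReach (expandG G M) W a b) :
    AvoidReach G {j | modSet j ⊆ W} a.1 b.1 := by
  refine h.induction_on (P := fun z => AvoidReach G {j | modSet j ⊆ W} a.1 z.1)
    (.refl fun ha : modSet a.1 ⊆ W => h.left_notMem (ha rfl)) fun c d _ hc hcd hd => ?_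
  by_cases hcd1 : c.1 = d.1
  · exact hcd1 ▸ hc
  · exact hc.step ((expandG_adj_of_fst_ne hcd1).1 hcd) fun hd1 => hd (hd1 rfl)

/-- A walk of `G` lifts to any endpoints in distinct modules: every vertex of a module the walk
enters is adjacent to the vertices of the module it comes from. -/
lemma AvoidReach.expandG_of_fst {a b : Σ i, V i}
    (h : AvoidReach G {j | modSet j ⊆ W} a.1 b.1) (hab : a.1 ≠ b.1) (ha : a ∉ W) (hb : b ∉ W) :
    AvoidReach (expandG G M) W a b := by
  refine (h.induction_on
    (P := fun j => j = a.1 ∨ ∀ z : Σ i, V i, z.1 = j → z ∉ W → AvoidReach (expandG G M) W a z)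
    (Or.inl rfl) fun j c hj hPj hjc _ => ?_).resolve_left hab.symm b rfl hb
  refine or_iff_not_imp_left.2 fun _ z hzc hz => ?_
  obtain ⟨w, hwj, hw⟩ : ∃ w : Σ i, V i, w.1 = j ∧ AvoidReach (expandG G M) W a w := by
    rcases hPj with rfl | hPj
    · exact ⟨a, rfl, .refl ha⟩
    · obtain ⟨w, hwj, hwW⟩ := Set.not_subset.1 hj.right_notMem
      exact ⟨w, hwj, hPj w hwj hwW⟩
  subst hwj hzc
  exact hw.step ((expandG_adj_of_fst_ne hjc.ne).2 hjc) hz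

lemma fst_eq_of_avoidReach {u v a b z : Σ i, V i} (huv : ¬ AvoidReach (expandG G M) S u v)
    (ha : AvoidReach (expandG G M) S u a) (hb : AvoidReach (expandG G M) S v b) (hab : a.1 = b.1)
    (hz : AvoidReach (expandG G M) S u z) : z.1 = a.1 := by
  refine (ha.symm.trans hz).induction_on (P := fun z => z.1 = a.1) rfl fun c d hc hc1 hcd hd => ?_
  by_contra hd1
  have hGdb : G.Adj d.1 b.1 := by
    have := ((expandG_adj_of_fst_ne fun h => hd1 (h.symm.trans hc1)).1 hcd).symm
    rwa [hc1, hab] at this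
  have hdb := (expandG_adj_of_fst_ne (M := M) fun h => hd1 (h.trans hab.symm)).2 hGdb
  exact huv (((ha.trans hc).step hcd hd).trans (hb.step hdb.symm hd).symm)

lemma setNbhd_modSet_subset {u v : Σ i, V i} {i : Fin k} {x y : V i}
    (huv : ¬ AvoidReach (expandG G M) S u v) (hx : AvoidReach (expandG G M) S u ⟨i, x⟩)
    (hy : AvoidReach (expandG G M) S v ⟨i, y⟩) : setNbhd (expandG G M) (modSet i) ⊆ S := by
  rintro s ⟨hs, a, rfl, hsa⟩
  by_contra hsS
  have hG := (expandG_adj_of_fst_ne hs).1 hsa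
  have hsx : (expandG G M).Adj s ⟨a.1, x⟩ := (expandG_adj_of_fst_ne (b := ⟨a.1, x⟩) hs).2 hG
  have hsy : (expandG G M).Adj s ⟨a.1, y⟩ := (expandG_adj_of_fst_ne (b := ⟨a.1, y⟩) hs).2 hG
  exact huv ((hx.step hsx.symm hsS).trans (hy.step hsy.symm hsS).symm)

lemma isMinSep_preimage_mk {i : Fin k} {x y : V i}
    (h : IsMinSep (expandG G M) S ⟨i, x⟩ ⟨i, y⟩) (hN : setNbhd (expandG G M) (modSet i) ⊆ S) :
    IsMinSep (M i) (Sigma.mk i ⁻¹' S) x y := by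
  refine ⟨⟨h.1.1, h.1.2.1, fun hr => h.1.2.2 ((avoidReach_expandG_mk_iff hN).2 hr)⟩,
    fun T hT hTsep => ?_⟩
  set W := S \ modSet i ∪ Sigma.mk i '' T
  have hpre : Sigma.mk i ⁻¹' W = T := by
    ext z
    simp [W, modSet, sigma_mk_injective.mem_set_image]
  obtain ⟨z, hzS, hzT⟩ := Set.exists_of_ssubset hT
  have hWS : W ⊂ S :=
    ⟨Set.union_subset Set.sdiff_subset (Set.image_subset_iff.2 hT.subset),
      fun hSW => hzT (hpre ▸ hSW hzS)⟩
  have hNW : setNbhd (expandG G M) (modSet i) ⊆ W := fun s hs => Or.inl ⟨hN hs, hs.1⟩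
  refine h.2 W hWS ⟨?_, ?_, fun hr => hTsep.2.2 (hpre ▸ (avoidReach_expandG_mk_iff hNW).1 hr)⟩
  · exact fun hx => hTsep.1 (hpre ▸ hx)
  · exact fun hy => hTsep.2.1 (hpre ▸ hy)

lemma exists_fst_eq_avoidReach_of_adj {w c s t : Σ i, V i}
    (hc : AvoidReach (expandG G M) S w c) (hcs : (expandG G M).Adj c s) (ht : t.1 = s.1)
    (htS : t ∉ S) : ∃ a : Σ i, V i, a.1 = s.1 ∧ AvoidReach (expandG G M) S w a := by
  by_cases hc1 : c.1 = s.1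
  · exact ⟨c, hc1, hc⟩
  · have hct : c.1 ≠ t.1 := ht ▸ hc1
    refine ⟨t, ht, hc.step ((expandG_adj_of_fst_ne hct).2 ?_) htS⟩
    rw [ht]
    exact (expandG_adj_of_fst_ne hc1).1 hcs

lemma modSet_subset_of_mem {u v s : Σ i, V i} (h : IsMinSep (expandG G M) S u v)
    (hsplit : ∀ a b : Σ i, V i, a.1 = b.1 →
      AvoidReach (expandG G M) S u a → ¬ AvoidReach (expandG G M) S v b)
    (hs : s ∈ S) : modSet s.1 ⊆ S := by
  intro t ht
  by_contra htS
  obtain ⟨c, hc, hcs⟩ := h.exists_adj_of_mem hs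
  obtain ⟨d, hd, hds⟩ := h.symm.exists_adj_of_mem hs
  obtain ⟨a, ha, hua⟩ := exists_fst_eq_avoidReach_of_adj hc hcs ht htS
  obtain ⟨b, hb, hvb⟩ := exists_fst_eq_avoidReach_of_adj hd hds ht htS
  exact hsplit a b (ha.trans hb.symm) hua hvb

lemma exists_isMinimalSeparator_eq_expansion {u v : Σ i, V i}
    (h : IsMinSep (expandG G M) S u v)
    (hsplit : ∀ a b : Σ i, V i, a.1 = b.1 →
      AvoidReach (expandG G M) S u a → ¬ AvoidReach (expandG G M) S v b) :
    ∃ SG : Set (Fin k), IsMinimalSeparator G SG ∧ S = {x : Σ i, V i | x.1 ∈ SG} := by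
  have hS : ∀ z, z ∈ S ↔ z.1 ∈ {j | modSet j ⊆ S} :=
    fun z => ⟨modSet_subset_of_mem h hsplit, fun hz => hz rfl⟩
  have huv : u.1 ≠ v.1 := fun he => hsplit u v he (.refl h.1.1) (.refl h.1.2.1)
  have hsep : IsSep G {j | modSet j ⊆ S} u.1 v.1 :=
    ⟨fun hu => h.1.1 ((hS u).2 hu), fun hv => h.1.2.1 ((hS v).2 hv),
      fun hr => h.1.2.2 (hr.expandG_of_fst huv h.1.1 h.1.2.1)⟩
  obtain ⟨T, hT, hTmin⟩ := hsep.exists_isMinSep_subset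
  refine ⟨T, ⟨_, _, hTmin⟩, Set.Subset.antisymm (fun z hz => ?_) fun z hz => (hS z).2 (hT hz)⟩
  by_contra hzT
  refine h.2 (S \ modSet z.1) ⟨Set.sdiff_subset, fun hsub => (hsub hz).2 rfl⟩
    ⟨fun hu => h.1.1 hu.1, fun hv => h.1.2.1 hv.1,
      fun hr => hTmin.1.2.2 (hr.fst_of_expandG.anti ?_)⟩
  intro j hj y hy
  refine ⟨hT hj hy, fun hyz => hzT (?_ : z.1 ∈ T)⟩
  have hyz : y.1 = z.1 := hyz
  have hy : y.1 = j := hy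
  rwa [← hyz, hy]

end Expansion

theorem statement_9_general {k : ℕ} {V : Fin k → Type}
    (G : SimpleGraph (Fin k)) (M : ∀ i, SimpleGraph (V i))
    (S : Set (Σ i, V i)) (hS : IsMinimalSeparator (expandG G M) S) :
    (∃ SG : Set (Fin k), IsMinimalSeparator G SG ∧ S = {x : Σ i, V i | x.1 ∈ SG}) ∨
    (∃ i : Fin k, IsMinimalSeparator (M i) (Sigma.mk i ⁻¹' S) ∧
      S \ modSet i = setNbhd (expandG G M) (modSet i)) := by
  obtain ⟨u, v, h⟩ := hS
  by_cases hsplit : ∃ a b : Σ i, V i, a.1 = b.1 ∧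
      AvoidReach (expandG G M) S u a ∧ AvoidReach (expandG G M) S v b
  · right
    obtain ⟨⟨i, x⟩, ⟨j, y⟩, hij, hx, hy⟩ := hsplit
    obtain rfl : i = j := hij
    have hCu := fun z => fst_eq_of_avoidReach h.1.2.2 hx hy rfl (z := z)
    have hCv := fun z => fst_eq_of_avoidReach (mt AvoidReach.symm h.1.2.2) hy hx rfl (z := z)
    obtain ⟨u1, u2⟩ := u
    obtain ⟨v1, v2⟩ := v
    obtain rfl : i = u1 := (hCu _ (.refl h.1.1)).symm
    obtain rfl : i = v1 := (hCv _ (.refl h.1.2.1)).symm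
    have hN := setNbhd_modSet_subset h.1.2.2 hx hy
    exact ⟨i, ⟨u2, v2, isMinSep_preimage_mk h hN⟩,
      Set.Subset.antisymm (h.diff_subset_setNbhd hCu) fun s hs => ⟨hN hs, hs.1⟩⟩
  · left
    push Not at hsplit
    exact exists_isMinimalSeparator_eq_expansion h hsplit

theorem statement_9 {k : ℕ} {V : Fin k → Type} [∀ i, Fintype (V i)]
    (G : SimpleGraph (Fin k)) (M : ∀ i, SimpleGraph (V i))
    (S : Set (Σ i, V i)) (hS : IsMinimalSeparator (expandG G M) S) :
    (∃ SG : Set (Fin k), IsMinimalSeparator G SG ∧ S = {x : Σ i, V i | x.1 ∈ SG}) ∨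
    (∃ i : Fin k, IsMinimalSeparator (M i) (Sigma.mk i ⁻¹' S) ∧
      S \ modSet i = setNbhd (expandG G M) (modSet i)) :=
  statement_9_general G M S hS
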